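/- Let A = F_q[θ], n | q-1, f ∈ A n-th power free with deg f ≤ n, and E_t = θ + f^{(q-1)/n}τ. Then log_E converges on the ring of integers O_∞ = {a ∈ K_∞ : |a|_∞ ≤ 1}, and for all a ∈ O_∞ we have exp_E(log_E(a)) = a; consequently O_∞ ⊆ exp_E(K_∞) and A + exp_E(K_∞) = K_∞. -/

import Mathlib

/-!
`log_E` and `exp_E` are the `q`-linear series with coefficients `ℓ_k` and `e_k`, which satisfy
`ℓ_{k+1} (θ - θ^{q^{k+1}}) = ℓ_k g^{q^k}` and `e_{k+1} (θ^{q^{k+1}} - θ) = g e_k^q` with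
`g = f^{(q-1)/n}`. Hence the coefficients `S_N` of the composite `exp_E ∘ log_E` satisfy
`S_{N+1} (θ^{q^{N+1}} - θ) = g S_N^q - g^{q^N} S_N`, and `S_0 = 1` forces `S_N = 0` for `N > 0`.
Since `deg f ≤ n`, both `ℓ_k` and `e_k` have degree at most `-k`, so `|ℓ_k|, |e_k| ≤ q^{-k}`.
For `|a| ≤ 1` the double series `∑ e_k (ℓ_m a^{q^m})^{q^k}` is therefore absolutely summable, and
summing it along antidiagonals gives `∑ S_N a^{q^N} = a`. Finally, if `x - p ∈ O_∞` with `p ∈ A`,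
then `x - p = exp_E (log_E (x - p))`.
-/

open Finset Polynomial

theorem Nat.dvd_pow_sub_one_of_dvd_sub_one {q n : ℕ} (hn : n ∣ q - 1) (k : ℕ) : n ∣ q ^ k - 1 :=
  hn.trans (by simpa using Nat.sub_dvd_pow_sub_pow q 1 k)

theorem Nat.pow_succ_sub_one_div {q n : ℕ} (hn : n ∣ q - 1) (k : ℕ) :
    (q ^ (k + 1) - 1) / n = (q ^ k - 1) / n + (q - 1) / n * q ^ k := by
  have h : q ^ (k + 1) - 1 = (q ^ k - 1) + (q - 1) * q ^ k := by
    rcases Nat.eq_zero_or_pos q with rfl | hq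
    · cases k <;> simp
    · zify [Nat.one_le_pow k q hq, Nat.one_le_pow (k + 1) q hq, hq]
      ring
  rw [h, Nat.add_div_of_dvd_right (Nat.dvd_pow_sub_one_of_dvd_sub_one hn k),
    Nat.mul_div_right_comm hn]

theorem Nat.pow_succ_sub_one_div' {q n : ℕ} (hn : n ∣ q - 1) (k : ℕ) :
    (q ^ (k + 1) - 1) / n = (q - 1) / n + (q ^ k - 1) / n * q := by
  have h : q ^ (k + 1) - 1 = (q - 1) + (q ^ k - 1) * q := by
    rcases Nat.eq_zero_or_pos q with rfl | hq
    · simp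
    · zify [Nat.one_le_pow k q hq, Nat.one_le_pow (k + 1) q hq, hq]
      ring
  rw [h, Nat.add_div_of_dvd_right hn,
    Nat.mul_div_right_comm (Nat.dvd_pow_sub_one_of_dvd_sub_one hn k)]

theorem Nat.pow_sub_one_add_le_sum_pow {q : ℕ} (hq : 1 ≤ q) (k : ℕ) :
    q ^ k - 1 + k ≤ ∑ j ∈ Icc 1 k, q ^ j := by
  induction k with
  | zero => simp
  | succ k ih =>
    rw [sum_Icc_succ_top (by omega)]
    have := Nat.one_le_pow k q hq
    have := Nat.pow_le_pow_right hq (Nat.le_add_right k 1)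
    omega

theorem Nat.pow_sub_one_add_le_mul_pow {q : ℕ} (hq : 1 ≤ q) (k : ℕ) :
    q ^ k - 1 + k ≤ k * q ^ k := by
  rcases k with _ | k
  · simp
  · have := Nat.one_le_pow (k + 1) q hq
    have := Nat.mul_le_mul_left k this
    rw [add_mul, one_mul]
    omega

section Frobenius

variable (Fq : Type*) [Field Fq] [Fintype Fq] {R : Type*} [CommRing R] [Algebra Fq R]

theorem FiniteField.coe_frobeniusAlgHom_pow (k : ℕ) :
    ⇑(FiniteField.frobeniusAlgHom Fq R ^ k) = (· ^ Fintype.card Fq ^ k) := by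
  rw [AlgHom.coe_pow, FiniteField.coe_frobeniusAlgHom, pow_iterate]

theorem FiniteField.sum_pow_card {ι : Type*} (s : Finset ι) (f : ι → R) :
    (∑ i ∈ s, f i) ^ Fintype.card Fq = ∑ i ∈ s, f i ^ Fintype.card Fq :=
  map_sum (FiniteField.frobeniusAlgHom Fq R) f s

theorem FiniteField.sub_pow_card_pow (x y : R) (k : ℕ) :
    (x - y) ^ Fintype.card Fq ^ k = x ^ Fintype.card Fq ^ k - y ^ Fintype.card Fq ^ k := by
  simpa only [FiniteField.coe_frobeniusAlgHom_pow] using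
    map_sub (FiniteField.frobeniusAlgHom Fq R ^ k) x y

theorem HasSum.pow_card_pow [TopologicalSpace R] [IsTopologicalRing R] {ι : Type*} {f : ι → R}
    {a : R} (h : HasSum f a) (k : ℕ) :
    HasSum (fun i ↦ f i ^ Fintype.card Fq ^ k) (a ^ Fintype.card Fq ^ k) := by
  have hc := FiniteField.coe_frobeniusAlgHom_pow Fq (R := R) k
  simpa only [hc, Function.comp_def] using
    h.map (FiniteField.frobeniusAlgHom Fq R ^ k) (hc ▸ continuous_pow _)

end Frobenius

section TwistedComposition

variable {R : Type*} [CommRing R]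

/-- The coefficient of `τ ^ N` in `(∑ e k τ ^ k) * (∑ ℓ m τ ^ m)` in the twisted power series ring
`R{{τ}}`, where `τ a = a ^ q τ`. -/
def twistedMulCoeff (q : ℕ) (e ℓ : ℕ → R) (N : ℕ) : R :=
  ∑ km ∈ antidiagonal N, e km.1 * ℓ km.2 ^ q ^ km.1

theorem map_twistedMulCoeff {S : Type*} [CommRing S] (φ : R →+* S) (q : ℕ)
    (e ℓ : ℕ → R) (N : ℕ) :
    φ (twistedMulCoeff q e ℓ N) = twistedMulCoeff q (φ ∘ e) (φ ∘ ℓ) N := by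
  simp [twistedMulCoeff, map_sum, map_mul, map_pow]

variable (Fq : Type*) [Field Fq] [Fintype Fq] [Algebra Fq R]
  {θ g : R} {e ℓ : ℕ → R}

local notation "q" => Fintype.card Fq

theorem twistedMulCoeff_succ_mul
    (hℓ : ∀ k, ℓ (k + 1) * (θ - θ ^ q ^ (k + 1)) = ℓ k * g ^ q ^ k)
    (he : ∀ k, e (k + 1) * (θ ^ q ^ (k + 1) - θ) = g * e k ^ q) (N : ℕ) :
    twistedMulCoeff q e ℓ (N + 1) * (θ ^ q ^ (N + 1) - θ) =
      g * twistedMulCoeff q e ℓ N ^ q - g ^ q ^ N * twistedMulCoeff q e ℓ N := by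
  -- Split `θ ^ q ^ (N + 1) - θ` at `θ ^ q ^ k`: the first part is absorbed by the recursion of `ℓ`
  -- raised to the power `q ^ k`, the second by the recursion of `e`.
  have split : twistedMulCoeff q e ℓ (N + 1) * (θ ^ q ^ (N + 1) - θ) =
      ∑ km ∈ antidiagonal (N + 1), e km.1 * ℓ km.2 ^ q ^ km.1 * (θ ^ q ^ (N + 1) - θ ^ q ^ km.1) +
      ∑ km ∈ antidiagonal (N + 1), e km.1 * ℓ km.2 ^ q ^ km.1 * (θ ^ q ^ km.1 - θ) := by
    rw [twistedMulCoeff, sum_mul, ← sum_add_distrib]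
    exact sum_congr rfl fun _ _ ↦ by ring
  have hlog : ∑ km ∈ antidiagonal (N + 1), e km.1 * ℓ km.2 ^ q ^ km.1 *
      (θ ^ q ^ (N + 1) - θ ^ q ^ km.1) = -(g ^ q ^ N * twistedMulCoeff q e ℓ N) := by
    rw [Nat.sum_antidiagonal_succ', sub_self, mul_zero, zero_add, twistedMulCoeff, mul_sum,
      ← sum_neg_distrib]
    refine sum_congr rfl fun km hkm ↦ ?_
    have hN : km.1 + km.2 = N := mem_antidiagonal.mp hkm
    have h := congrArg (· ^ q ^ km.1) (hℓ km.2)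
    simp only [mul_pow, FiniteField.sub_pow_card_pow, ← pow_mul, ← pow_add] at h
    rw [show km.2 + 1 + km.1 = N + 1 by omega, show km.2 + km.1 = N by omega] at h
    linear_combination -e km.1 * h
  have hexp : ∑ km ∈ antidiagonal (N + 1), e km.1 * ℓ km.2 ^ q ^ km.1 * (θ ^ q ^ km.1 - θ) =
      g * twistedMulCoeff q e ℓ N ^ q := by
    simp only [Nat.sum_antidiagonal_succ, pow_zero, pow_one, sub_self, mul_zero, zero_add]
    rw [twistedMulCoeff, FiniteField.sum_pow_card, mul_sum]
    refine sum_congr rfl fun km _ ↦ ?_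
    rw [mul_pow, ← pow_mul, ← pow_succ]
    linear_combination ℓ km.2 ^ q ^ (km.1 + 1) * he km.1
  rw [split, hlog, hexp]
  ring

theorem twistedMulCoeff_eq_ite [NoZeroDivisors R] (hℓ0 : ℓ 0 = 1) (he0 : e 0 = 1)
    (hθ : ∀ k, θ ^ q ^ (k + 1) ≠ θ)
    (hℓ : ∀ k, ℓ (k + 1) * (θ - θ ^ q ^ (k + 1)) = ℓ k * g ^ q ^ k)
    (he : ∀ k, e (k + 1) * (θ ^ q ^ (k + 1) - θ) = g * e k ^ q) (N : ℕ) :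
    twistedMulCoeff q e ℓ N = if N = 0 then 1 else 0 := by
  induction N with
  | zero => simp [twistedMulCoeff, hℓ0, he0]
  | succ N ih =>
    have h : twistedMulCoeff q e ℓ (N + 1) * (θ ^ q ^ (N + 1) - θ) = 0 := by
      rw [twistedMulCoeff_succ_mul Fq hℓ he, ih]
      split_ifs with hN <;> simp [hN, zero_pow Fintype.card_ne_zero]
    simpa using (mul_eq_zero.mp h).resolve_right (sub_ne_zero.mpr (hθ N))

end TwistedComposition

section Coefficients

variable {K : Type*} [Field K] (q n : ℕ) (F θ : K)

/-- `logCoeff` and `expCoeff` are the coefficients of `log_E` and `exp_E` for the Drinfeld module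
`E_θ = θ + F ^ ((q - 1) / n) τ`. -/
def logCoeff (k : ℕ) : K :=
  (-1) ^ k * F ^ ((q ^ k - 1) / n) / ∏ j ∈ Icc 1 k, (θ ^ q ^ j - θ)

def expCoeff (k : ℕ) : K :=
  F ^ ((q ^ k - 1) / n) / ∏ j ∈ Icc 1 k, (θ ^ q ^ j - θ) ^ q ^ (k - j)

@[simp] theorem logCoeff_zero : logCoeff q n F θ 0 = 1 := by simp [logCoeff]

@[simp] theorem expCoeff_zero : expCoeff q n F θ 0 = 1 := by simp [expCoeff]

variable {q n F θ}

theorem logCoeff_succ_mul (hn : n ∣ q - 1) {k : ℕ} (hθ : θ ^ q ^ (k + 1) ≠ θ) :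
    logCoeff q n F θ (k + 1) * (θ - θ ^ q ^ (k + 1)) =
      logCoeff q n F θ k * (F ^ ((q - 1) / n)) ^ q ^ k := by
  have hθ' : θ ^ q ^ (k + 1) - θ ≠ 0 := sub_ne_zero.mpr hθ
  rw [logCoeff, logCoeff, prod_Icc_succ_top (by omega), Nat.pow_succ_sub_one_div hn, pow_add F,
    pow_mul F, ← neg_sub θ]
  field_simp
  ring

theorem expCoeff_succ_mul (hn : n ∣ q - 1) {k : ℕ} (hθ : θ ^ q ^ (k + 1) ≠ θ) :
    expCoeff q n F θ (k + 1) * (θ ^ q ^ (k + 1) - θ) =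
      F ^ ((q - 1) / n) * expCoeff q n F θ k ^ q := by
  have hθ' : θ ^ q ^ (k + 1) - θ ≠ 0 := sub_ne_zero.mpr hθ
  have hprod : ∏ j ∈ Icc 1 (k + 1), (θ ^ q ^ j - θ) ^ q ^ (k + 1 - j) =
      (θ ^ q ^ (k + 1) - θ) * (∏ j ∈ Icc 1 k, (θ ^ q ^ j - θ) ^ q ^ (k - j)) ^ q := by
    rw [prod_Icc_succ_top (by omega), Nat.sub_self, pow_zero, pow_one, mul_comm, ← prod_pow]
    congr 1
    refine prod_congr rfl fun j hj ↦ ?_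
    rw [← pow_mul, ← pow_succ, Nat.sub_add_comm (mem_Icc.mp hj).2]
  rw [expCoeff, expCoeff, hprod, Nat.pow_succ_sub_one_div' hn, pow_add, pow_mul, div_pow]
  field_simp

end Coefficients

section Degrees

variable {K : Type*} [Field K] {q : ℕ}

theorem natDegree_prod_X_pow_pow_sub_X (hq : 1 < q) (k : ℕ) :
    (∏ j ∈ Icc 1 k, (X ^ q ^ j - X : K[X])).natDegree = ∑ j ∈ Icc 1 k, q ^ j := by
  have hj0 : ∀ j ∈ Icc 1 k, j ≠ 0 := fun j hj ↦ by grind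
  rw [natDegree_prod _ _ fun j hj ↦ FiniteField.X_pow_card_pow_sub_X_ne_zero K (hj0 j hj) hq]
  exact sum_congr rfl fun j hj ↦ FiniteField.X_pow_card_pow_sub_X_natDegree_eq K (hj0 j hj) hq

theorem natDegree_prod_X_pow_pow_sub_X_pow (hq : 1 < q) (k : ℕ) :
    (∏ j ∈ Icc 1 k, (X ^ q ^ j - X : K[X]) ^ q ^ (k - j)).natDegree = k * q ^ k := by
  have hj0 : ∀ j ∈ Icc 1 k, j ≠ 0 := fun j hj ↦ by grind
  rw [natDegree_prod _ _ fun j hj ↦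
    pow_ne_zero _ (FiniteField.X_pow_card_pow_sub_X_ne_zero K (hj0 j hj) hq)]
  rw [sum_congr rfl fun j hj ↦ by
    rw [natDegree_pow, FiniteField.X_pow_card_pow_sub_X_natDegree_eq K (hj0 j hj) hq, ← pow_add,
      Nat.sub_add_cancel (mem_Icc.mp hj).2]]
  simp

theorem natDegree_pow_le_pow_sub_one {n : ℕ} {f : K[X]} (hn : n ∣ q - 1) (hf : f.natDegree ≤ n)
    (k : ℕ) : (f ^ ((q ^ k - 1) / n)).natDegree ≤ q ^ k - 1 :=
  calc (f ^ ((q ^ k - 1) / n)).natDegree ≤ (q ^ k - 1) / n * n :=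
        natDegree_pow_le_of_le _ hf
    _ = q ^ k - 1 := Nat.div_mul_cancel (Nat.dvd_pow_sub_one_of_dvd_sub_one hn k)

theorem RatFunc.X_pow_pow_ne_X {K : Type*} [Field K] {q : ℕ} (hq : 1 < q) {k : ℕ} (hk : k ≠ 0) :
    (RatFunc.X : RatFunc K) ^ q ^ k ≠ RatFunc.X := by
  rw [← sub_ne_zero, ← RatFunc.algebraMap_X, ← map_pow, ← map_sub]
  exact RatFunc.algebraMap_ne_zero (FiniteField.X_pow_card_pow_sub_X_ne_zero K hk hq)

end Degrees

section NormBounds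

variable {Fq : Type*} [Field Fq] {Kinf : Type*} [NormedField Kinf] {ι : RatFunc Fq →+* Kinf}
  {c : ℝ}

theorem norm_map_div_le (hc : 1 ≤ c)
    (hv : ∀ x : RatFunc Fq, x ≠ 0 → ‖ι x‖ = c ^ (x.intDegree : ℝ)) {P Q : Fq[X]} {k : ℕ}
    (hPQ : P.natDegree + k ≤ Q.natDegree) :
    ‖ι (algebraMap Fq[X] (RatFunc Fq) P / algebraMap Fq[X] (RatFunc Fq) Q)‖ ≤ c⁻¹ ^ k := by
  by_cases hPQ0 : P = 0 ∨ Q = 0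
  · rcases hPQ0 with rfl | rfl <;>
    · simp only [map_zero, zero_div, div_zero, norm_zero]
      positivity
  obtain ⟨hP, hQ⟩ := not_or.mp hPQ0
  have hP' := RatFunc.algebraMap_ne_zero hP
  have hQ' := RatFunc.algebraMap_ne_zero hQ
  rw [hv _ (div_ne_zero hP' hQ'), RatFunc.intDegree_div hP' hQ', RatFunc.intDegree_polynomial,
    RatFunc.intDegree_polynomial, inv_pow, ← Real.rpow_natCast, ← Real.rpow_neg (by positivity)]
  exact Real.rpow_le_rpow_of_exponent_le hc (by push_cast; linarith [(by exact_mod_cast hPQ :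
    (P.natDegree : ℝ) + k ≤ Q.natDegree)])

variable {q n : ℕ} {f : Fq[X]}

theorem norm_map_logCoeff_le (hc : 1 ≤ c)
    (hv : ∀ x : RatFunc Fq, x ≠ 0 → ‖ι x‖ = c ^ (x.intDegree : ℝ)) (hq : 1 < q)
    (hn : n ∣ q - 1) (hf : f.natDegree ≤ n) (k : ℕ) :
    ‖ι (logCoeff q n (algebraMap Fq[X] (RatFunc Fq) f) RatFunc.X k)‖ ≤ c⁻¹ ^ k := by
  have hquot : logCoeff q n (algebraMap Fq[X] (RatFunc Fq) f) RatFunc.X k =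
      (-1) ^ k * (algebraMap Fq[X] (RatFunc Fq) (f ^ ((q ^ k - 1) / n)) /
        algebraMap Fq[X] (RatFunc Fq) (∏ j ∈ Icc 1 k, (X ^ q ^ j - X))) := by
    simp [logCoeff, map_prod, RatFunc.algebraMap_X, mul_div_assoc]
  rw [hquot, map_mul, norm_mul, map_pow, map_neg, map_one, norm_pow, norm_neg, norm_one, one_pow,
    one_mul]
  refine norm_map_div_le hc hv ?_
  rw [natDegree_prod_X_pow_pow_sub_X hq]
  exact (Nat.add_le_add_right (natDegree_pow_le_pow_sub_one hn hf k) k).trans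
    (Nat.pow_sub_one_add_le_sum_pow hq.le k)

theorem norm_map_expCoeff_le (hc : 1 ≤ c)
    (hv : ∀ x : RatFunc Fq, x ≠ 0 → ‖ι x‖ = c ^ (x.intDegree : ℝ)) (hq : 1 < q)
    (hn : n ∣ q - 1) (hf : f.natDegree ≤ n) (k : ℕ) :
    ‖ι (expCoeff q n (algebraMap Fq[X] (RatFunc Fq) f) RatFunc.X k)‖ ≤ c⁻¹ ^ k := by
  have hquot : expCoeff q n (algebraMap Fq[X] (RatFunc Fq) f) RatFunc.X k =
      algebraMap Fq[X] (RatFunc Fq) (f ^ ((q ^ k - 1) / n)) /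
        algebraMap Fq[X] (RatFunc Fq) (∏ j ∈ Icc 1 k, (X ^ q ^ j - X) ^ q ^ (k - j)) := by
    simp [expCoeff, map_prod, RatFunc.algebraMap_X]
  rw [hquot]
  refine norm_map_div_le hc hv ?_
  rw [natDegree_prod_X_pow_pow_sub_X_pow hq]
  exact (Nat.add_le_add_right (natDegree_pow_le_pow_sub_one hn hf k) k).trans
    (Nat.pow_sub_one_add_le_mul_pow hq.le k)

end NormBounds

theorem HasSum.sum_antidiagonal {α A : Type*} [AddCommMonoid α] [TopologicalSpace α]
    [RegularSpace α] [ContinuousAdd α] [AddCommMonoid A] [HasAntidiagonal A] {v : A × A → α}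
    {a : α} (h : HasSum v a) : HasSum (fun N ↦ ∑ km ∈ antidiagonal N, v km) a :=
  (HasAntidiagonal.sigmaAntidiagonalEquivProd.hasSum_iff.mpr h).sigma fun N ↦
    (antidiagonal N).hasSum v

section Inversion

variable (Fq : Type*) [Field Fq] [Fintype Fq] {K : Type*} [NormedField K] [CompleteSpace K]
  [Algebra Fq K]

local notation "q" => Fintype.card Fq

theorem exists_hasSum_log_and_hasSum_exp {E L : ℕ → K} {r : ℝ} (hr : r < 1)
    (hE : ∀ k, ‖E k‖ ≤ r ^ k) (hL : ∀ k, ‖L k‖ ≤ r ^ k)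
    (hEL : ∀ N, twistedMulCoeff q E L N = if N = 0 then 1 else 0) {x : K} (hx : ‖x‖ ≤ 1) :
    ∃ l, HasSum (fun k ↦ L k * x ^ q ^ k) l ∧ HasSum (fun k ↦ E k * l ^ q ^ k) x := by
  have hr0 : 0 ≤ r := (norm_nonneg _).trans (by simpa using hE 1)
  have hgeo : Summable (r ^ ·) := summable_geometric_of_lt_one hr0 hr
  have hlog : ∀ m, ‖L m * x ^ q ^ m‖ ≤ r ^ m := fun m ↦ by
    rw [norm_mul, norm_pow]
    exact mul_le_of_le_one_right (norm_nonneg _) (pow_le_one₀ (norm_nonneg x) hx)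
      |>.trans (hL m)
  obtain ⟨l, hl⟩ := Summable.of_norm_bounded hgeo hlog
  refine ⟨l, hl, ?_⟩
  -- `v` is the double series obtained by expanding `exp (log x)`.
  set v : ℕ × ℕ → K := fun km ↦ E km.1 * (L km.2 * x ^ q ^ km.2) ^ q ^ km.1
  have hvnorm : ∀ km : ℕ × ℕ, ‖v km‖ ≤ r ^ km.1 * r ^ km.2 := fun ⟨k, m⟩ ↦ by
    rw [norm_mul, norm_pow]
    refine mul_le_mul (hE k) ?_ (by positivity) (by positivity)
    exact (pow_le_of_le_one (norm_nonneg _) ((hlog m).trans (pow_le_one₀ hr0 hr.le))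
      (pow_ne_zero _ Fintype.card_ne_zero)).trans (hlog m)
  have hvsum : Summable v :=
    .of_norm_bounded (hgeo.mul_of_nonneg hgeo (fun _ ↦ by positivity) fun _ ↦ by positivity) hvnorm
  have hdiag : ∀ N, ∑ km ∈ antidiagonal N, v km = if N = 0 then x else 0 := fun N ↦ by
    have h : ∑ km ∈ antidiagonal N, v km = twistedMulCoeff q E L N * x ^ q ^ N := by
      rw [twistedMulCoeff, sum_mul]
      refine sum_congr rfl fun km hkm ↦ ?_
      simp only [v]
      rw [mul_pow, ← pow_mul, ← pow_add, ← mem_antidiagonal.mp hkm, add_comm km.1]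
      ring
    rw [h, hEL]
    split_ifs with hN <;> simp [hN]
  have hvx : HasSum v x := by
    have h := hvsum.hasSum.sum_antidiagonal
    simp only [hdiag] at h
    exact (h.unique (hasSum_ite_eq 0 x)) ▸ hvsum.hasSum
  exact hvx.prod_fiberwise fun k ↦ (hl.pow_card_pow Fq k).mul_left (E k)

end Inversion

theorem stmt_16_general (Fq : Type*) [Field Fq] [Fintype Fq]
    (n : ℕ) (hn : n ∣ Fintype.card Fq - 1)
    (f : Polynomial Fq) (hdeg : f.natDegree ≤ n)
    (Kinf : Type*) [NormedField Kinf] [CompleteSpace Kinf]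
    (ι : RatFunc Fq →+* Kinf)
    (hv : ∀ x : RatFunc Fq, x ≠ 0 → ‖ι x‖ = (Fintype.card Fq : ℝ) ^ (x.intDegree : ℝ)) :
    let q := Fintype.card Fq
    let ℓ : ℕ → RatFunc Fq := fun k =>
      (-1) ^ k * algebraMap (Polynomial Fq) (RatFunc Fq) f ^ ((q ^ k - 1) / n) /
        ∏ j ∈ Finset.Icc 1 k, (RatFunc.X ^ q ^ j - RatFunc.X)
    let e : ℕ → RatFunc Fq := fun k =>
      algebraMap (Polynomial Fq) (RatFunc Fq) f ^ ((q ^ k - 1) / n) /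
        ∏ j ∈ Finset.Icc 1 k, (RatFunc.X ^ q ^ j - RatFunc.X) ^ q ^ (k - j)
    (∀ a : Kinf, ‖a‖ ≤ 1 → ∃ l : Kinf,
      HasSum (fun k => ι (ℓ k) * a ^ q ^ k) l ∧
      HasSum (fun k => ι (e k) * l ^ q ^ k) a) ∧
    ((∀ x : Kinf, ∃ p : Polynomial Fq,
        ‖x - ι (algebraMap (Polynomial Fq) (RatFunc Fq) p)‖ ≤ 1) →
      ∀ x : Kinf, ∃ (p : Polynomial Fq) (u : Kinf),
        HasSum (fun k => ι (e k) * u ^ q ^ k)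
          (x - ι (algebraMap (Polynomial Fq) (RatFunc Fq) p))) := by
  intro q ℓ e
  let _ : Algebra Fq Kinf := (ι.comp (algebraMap Fq (RatFunc Fq))).toAlgebra
  have hq : 1 < q := Fintype.one_lt_card
  have hθ (k : ℕ) : (RatFunc.X : RatFunc Fq) ^ q ^ (k + 1) ≠ RatFunc.X :=
    RatFunc.X_pow_pow_ne_X hq k.succ_ne_zero
  have hinv (N : ℕ) : twistedMulCoeff q e ℓ N = if N = 0 then 1 else 0 :=
    twistedMulCoeff_eq_ite Fq (logCoeff_zero ..) (expCoeff_zero ..) hθ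
      (fun k ↦ logCoeff_succ_mul hn (hθ k)) (fun k ↦ expCoeff_succ_mul hn (hθ k)) N
  have hcomp (N : ℕ) : twistedMulCoeff q (ι ∘ e) (ι ∘ ℓ) N = if N = 0 then 1 else 0 := by
    rw [← map_twistedMulCoeff, hinv]
    split_ifs <;> simp
  have hc : (1 : ℝ) ≤ q := by exact_mod_cast hq.le
  have hlog_exp (a : Kinf) (ha : ‖a‖ ≤ 1) : ∃ l : Kinf,
      HasSum (fun k ↦ ι (ℓ k) * a ^ q ^ k) l ∧ HasSum (fun k ↦ ι (e k) * l ^ q ^ k) a :=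
    exists_hasSum_log_and_hasSum_exp Fq (inv_lt_one_of_one_lt₀ (by exact_mod_cast hq))
      (norm_map_expCoeff_le hc hv hq hn hdeg) (norm_map_logCoeff_le hc hv hq hn hdeg) hcomp ha
  refine ⟨hlog_exp, fun hsplit x ↦ ?_⟩
  obtain ⟨p, hp⟩ := hsplit x
  obtain ⟨l, -, hl⟩ := hlog_exp _ hp
  exact ⟨p, l, hl⟩

/-- For `E_t = θ + f^{(q-1)/n} τ` with `deg f ≤ n ∣ q-1`, the logarithm series
`log_E(a) = Σ ℓ_k a^{q^k}` converges for every `a` in the ring of integers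
`O_∞ = {a : ‖a‖ ≤ 1}` of the complete nonarchimedean field `K_∞` (the completion of
`K = F_q(θ)` at `∞`, pinned down by `‖ι x‖ = q^{deg_∞ x}`), and
`exp_E(log_E(a)) = a`; consequently `O_∞ ⊆ exp_E(K_∞)`, and if `A + O_∞ = K_∞`
then `A + exp_E(K_∞) = K_∞`. -/
theorem stmt_16 (Fq : Type*) [Field Fq] [Fintype Fq]
    (n : ℕ) (hn : n ∣ Fintype.card Fq - 1) (hn0 : 0 < n)
    (f : Polynomial Fq) (hf0 : f ≠ 0) (hdeg : f.natDegree ≤ n)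
    (Kinf : Type*) [NormedField Kinf] [CompleteSpace Kinf]
    (hna : IsNonarchimedean (fun x : Kinf => ‖x‖))
    (ι : RatFunc Fq →+* Kinf)
    (hv : ∀ x : RatFunc Fq, x ≠ 0 → ‖ι x‖ = (Fintype.card Fq : ℝ) ^ (x.intDegree : ℝ)) :
    let q := Fintype.card Fq
    let ℓ : ℕ → RatFunc Fq := fun k =>
      (-1) ^ k * algebraMap (Polynomial Fq) (RatFunc Fq) f ^ ((q ^ k - 1) / n) /
        ∏ j ∈ Finset.Icc 1 k, (RatFunc.X ^ q ^ j - RatFunc.X)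
    let e : ℕ → RatFunc Fq := fun k =>
      algebraMap (Polynomial Fq) (RatFunc Fq) f ^ ((q ^ k - 1) / n) /
        ∏ j ∈ Finset.Icc 1 k, (RatFunc.X ^ q ^ j - RatFunc.X) ^ q ^ (k - j)
    (∀ a : Kinf, ‖a‖ ≤ 1 → ∃ l : Kinf,
      HasSum (fun k => ι (ℓ k) * a ^ q ^ k) l ∧
      HasSum (fun k => ι (e k) * l ^ q ^ k) a) ∧
    ((∀ x : Kinf, ∃ p : Polynomial Fq,
        ‖x - ι (algebraMap (Polynomial Fq) (RatFunc Fq) p)‖ ≤ 1) →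
      ∀ x : Kinf, ∃ (p : Polynomial Fq) (u : Kinf),
        HasSum (fun k => ι (e k) * u ^ q ^ k)
          (x - ι (algebraMap (Polynomial Fq) (RatFunc Fq) p))) :=
  stmt_16_general Fq n hn f hdeg Kinf ι hv
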